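/- arXiv:1507.00699 — 3 statements merged into one kernel-verified Lean document; each statement's English description precedes it below -/
import Mathlib

section
/- Let k ≥ 1, let ℓ ≥ 1 and r_1, …, r_k ≥ 1 be integers, and let u_1, …, u_k be integers. Let A be the (k+1) × (k+1) lower-triangular integer matrix with first column (ℓ, u_1, …, u_k), with remaining diagonal entries r_1, …, r_k, and zeros elsewhere. If the exponent of the finite abelian group ℤ^{k+1}/A·ℤ^{k+1} is squarefree, then for every i, gcd(ℓ, r_i) divides u_i. -/
/-!
The exponent `e` of the cokernel kills the class of the first basis vector, so `e • e₀ = A v`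
for some `v`. Reading off the rows gives `ℓ * v₀ = e` and `u_i * v₀ + r_i * v_{i+1} = 0`.
Since `ℓ * v₀` is squarefree, `gcd(ℓ, r_i)` (a divisor of `ℓ`) is coprime to `v₀`, and it divides
`u_i * v₀ = -r_i * v_{i+1}`; hence it divides `u_i`.
-/

theorem Submodule.exponent_nsmul_mem {R M : Type*} [Ring R] [AddCommGroup M] [Module R M]
    (N : Submodule R M) (x : M) : AddMonoid.exponent (M ⧸ N) • x ∈ N := by
  rw [← Submodule.Quotient.mk_eq_zero, Submodule.Quotient.mk_smul]
  exact AddMonoid.exponent_nsmul_eq_zero _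

namespace Matrix

theorem mulVec_apply_eq_sum_of_row_support_subset {n R : Type*} [Fintype n]
    [NonUnitalNonAssocSemiring R] (A : Matrix n n R) (v : n → R) {i : n} {s : Finset n}
    (hs : ∀ j ∉ s, A i j = 0) : (A *ᵥ v) i = ∑ j ∈ s, A i j * v j :=
  (Finset.sum_subset (Finset.subset_univ s) fun j _ hj => by simp [hs j hj]).symm

end Matrix

theorem Squarefree.isRelPrime_of_dvd_left {α : Type*} [CommMonoid α] {a b g : α}
    (h : Squarefree (a * b)) (hg : g ∣ a) : IsRelPrime g b :=
  fun _ hdg hdb => h _ (mul_dvd_mul (hdg.trans hg) hdb)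

theorem stmt_7_general (k : ℕ) (ℓ : ℤ) (r u : Fin k → ℤ)
    (A : Matrix (Fin (k + 1)) (Fin (k + 1)) ℤ)
    (hA00 : A 0 0 = ℓ)
    (hAcol : ∀ i : Fin k, A i.succ 0 = u i)
    (hAdiag : ∀ i : Fin k, A i.succ i.succ = r i)
    (hAzero : ∀ i j : Fin (k + 1), j ≠ 0 → i ≠ j → A i j = 0)
    (hsf : Squarefree
      (AddMonoid.exponent ((Fin (k + 1) → ℤ) ⧸ LinearMap.range A.mulVecLin))) :
    ∀ i, (Int.gcd ℓ (r i) : ℤ) ∣ u i := by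
  intro i
  set e := AddMonoid.exponent ((Fin (k + 1) → ℤ) ⧸ LinearMap.range A.mulVecLin)
  obtain ⟨v, hv⟩ := (LinearMap.range A.mulVecLin).exponent_nsmul_mem (Pi.single 0 1)
  have hrow0 : ℓ * v 0 = e := by
    have h := congrFun hv 0
    rw [Matrix.mulVecLin_apply, A.mulVec_apply_eq_sum_of_row_support_subset v (s := {0})
      fun j hj => hAzero 0 j (by simpa using hj) (by simpa [eq_comm] using hj),
      Finset.sum_singleton, hA00] at h
    simpa using h
  have hrow : u i * v 0 + r i * v i.succ = 0 := by
    have h := congrFun hv i.succ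
    rw [Matrix.mulVecLin_apply, A.mulVec_apply_eq_sum_of_row_support_subset v
      (s := {0, i.succ}) fun j hj => by
        simp only [Finset.mem_insert, Finset.mem_singleton, not_or] at hj
        exact hAzero _ j hj.1 (Ne.symm hj.2),
      Finset.sum_pair (Fin.succ_ne_zero i).symm, hAcol, hAdiag] at h
    simpa [Fin.succ_ne_zero] using h
  have hcop : IsRelPrime (Int.gcd ℓ (r i) : ℤ) (v 0) :=
    (hrow0 ▸ Int.squarefree_natCast.mpr hsf).isRelPrime_of_dvd_left (Int.gcd_dvd_left _ _)
  refine hcop.dvd_of_dvd_mul_right ?_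
  rw [eq_neg_of_add_eq_zero_left hrow, dvd_neg]
  exact (Int.gcd_dvd_right _ _).mul_right _

theorem stmt_7 (k : ℕ) (hk : 1 ≤ k) (ℓ : ℤ) (r u : Fin k → ℤ)
    (hℓ : 1 ≤ ℓ) (hr : ∀ i, 1 ≤ r i)
    (A : Matrix (Fin (k + 1)) (Fin (k + 1)) ℤ)
    (hA00 : A 0 0 = ℓ)
    (hAcol : ∀ i : Fin k, A i.succ 0 = u i)
    (hAdiag : ∀ i : Fin k, A i.succ i.succ = r i)
    (hAzero : ∀ i j : Fin (k + 1), j ≠ 0 → i ≠ j → A i j = 0)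
    (hsf : Squarefree
      (AddMonoid.exponent ((Fin (k + 1) → ℤ) ⧸ LinearMap.range A.mulVecLin))) :
    ∀ i, (Int.gcd ℓ (r i) : ℤ) ∣ u i :=
  stmt_7_general k ℓ r u A hA00 hAcol hAdiag hAzero hsf
end

section
/- Let α, β ∈ ℤ² be primitive vectors with |det(α, β)| = 2. If η ∈ ℤ² satisfies |det(α, η)| = 1 and |det(β, η)| = 1, then 2η = ±(α + β) or 2η = ±(α − β). In particular, there are exactly two such vectors η up to sign. -/
theorem stmt_9 (α β η : ℤ × ℤ)
    (hα : IsCoprime α.1 α.2) (hβ : IsCoprime β.1 β.2)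
    (hdet : (α.1 * β.2 - α.2 * β.1).natAbs = 2)
    (h1 : (α.1 * η.2 - α.2 * η.1).natAbs = 1)
    (h2 : (β.1 * η.2 - β.2 * η.1).natAbs = 1) :
    (2 : ℤ) • η = α + β ∨ (2 : ℤ) • η = -(α + β) ∨
      (2 : ℤ) • η = α - β ∨ (2 : ℤ) • η = -(α - β) := by
  have key1 : (α.1 * β.2 - α.2 * β.1) * η.1 =
      (α.1 * η.2 - α.2 * η.1) * β.1 - (β.1 * η.2 - β.2 * η.1) * α.1 := by ring
  have key2 : (α.1 * β.2 - α.2 * β.1) * η.2 =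
      (α.1 * η.2 - α.2 * η.1) * β.2 - (β.1 * η.2 - β.2 * η.1) * α.2 := by ring
  have hD := Int.natAbs_eq_iff.mp hdet
  have hd1 := Int.natAbs_eq_iff.mp h1
  have hd2 := Int.natAbs_eq_iff.mp h2
  simp only [Prod.ext_iff, Prod.smul_fst, Prod.smul_snd, Prod.fst_add, Prod.snd_add,
    Prod.fst_neg, Prod.snd_neg, Prod.fst_sub, Prod.snd_sub, smul_eq_mul] at *
  rcases hD with h | h <;> rcases hd1 with h1' | h1' <;> rcases hd2 with h2' | h2' <;>
    rw [h, h1', h2'] at key1 key2 <;> omega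
end

section
/- Let k ≥ 1, ℓ ≥ 1, r_1, …, r_k ≥ 1 and u_1, …, u_k be integers, and suppose there exist a prime p, an index i, and an integer j ≥ 1 such that p^j divides ℓ, p^j divides r_i, and p^j does not divide u_i. Let A be the (k+1) × (k+1) lower-triangular matrix with first column (ℓ, u_1, …, u_k), remaining diagonal entries r_1, …, r_k, and zeros elsewhere. Then the finite abelian group ℤ^{k+1}/A·ℤ^{k+1} contains an element of order p². -/
theorem stmt_14 (k : ℕ) (hk : 1 ≤ k) (ℓ : ℤ) (r u : Fin k → ℤ)
    (hℓ : 1 ≤ ℓ) (hr : ∀ i, 1 ≤ r i)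
    (p : ℕ) (hp : p.Prime) (i : Fin k) (j : ℕ) (hj : 1 ≤ j)
    (h1 : (p : ℤ) ^ j ∣ ℓ) (h2 : (p : ℤ) ^ j ∣ r i) (h3 : ¬ (p : ℤ) ^ j ∣ u i)
    (A : Matrix (Fin (k + 1)) (Fin (k + 1)) ℤ)
    (hA00 : A 0 0 = ℓ)
    (hAcol : ∀ i : Fin k, A i.succ 0 = u i)
    (hAdiag : ∀ i : Fin k, A i.succ i.succ = r i)
    (hAzero : ∀ i j : Fin (k + 1), j ≠ 0 → i ≠ j → A i j = 0) :
    ∃ x : (Fin (k + 1) → ℤ) ⧸ LinearMap.range A.mulVecLin,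
      addOrderOf x = p ^ 2 := by
  classical
  set R : Submodule ℤ (Fin (k + 1) → ℤ) := LinearMap.range A.mulVecLin with hR
  set e₀ : Fin (k + 1) → ℤ := Pi.single 0 1 with he₀
  set x₀ : (Fin (k + 1) → ℤ) ⧸ R := Submodule.Quotient.mk e₀ with hx₀
  -- row computations for mulVec
  have row0 : ∀ c : Fin (k + 1) → ℤ, A.mulVec c 0 = ℓ * c 0 := by
    intro c
    have : A.mulVec c 0 = ∑ m : Fin (k + 1), A 0 m * c m := by
      simp [Matrix.mulVec, dotProduct]
    rw [this, Fin.sum_univ_succ, hA00]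
    have : ∀ m : Fin k, A 0 m.succ * c m.succ = 0 := by
      intro m
      rw [hAzero 0 m.succ (Fin.succ_ne_zero m) (Fin.succ_ne_zero m).symm, zero_mul]
    simp [this]
  have rowS : ∀ (c : Fin (k + 1) → ℤ) (m : Fin k),
      A.mulVec c m.succ = u m * c 0 + r m * c m.succ := by
    intro c m
    have : A.mulVec c m.succ = ∑ n : Fin (k + 1), A m.succ n * c n := by
      simp [Matrix.mulVec, dotProduct]
    rw [this, Fin.sum_univ_succ, hAcol]
    congr 1
    rw [Finset.sum_eq_single m]
    · rw [hAdiag]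
    · intro b _ hb
      rw [hAzero m.succ b.succ (Fin.succ_ne_zero b)
        (fun h => hb (Fin.succ_injective _ h).symm), zero_mul]
    · intro h; exact absurd (Finset.mem_univ m) h
  -- Claim 2 : any integer m with m • x₀ = 0 is divisible by p^2
  have key : ∀ m : ℤ, m • e₀ ∈ R → (p : ℤ) ^ 2 ∣ m := by
    intro m hm
    obtain ⟨c, hc⟩ := hm
    have hc' : A.mulVec c = m • e₀ := by
      rw [← Matrix.mulVecLin_apply]; exact hc
    have h0 : ℓ * c 0 = m := by
      have := congrFun hc' 0
      rw [row0] at this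
      simpa [he₀, Pi.single_eq_same] using this
    have hi : u i * c 0 + r i * c i.succ = 0 := by
      have := congrFun hc' i.succ
      rw [rowS] at this
      simpa [he₀, Pi.single_eq_of_ne (Fin.succ_ne_zero i)] using this
    have hpc : (p : ℤ) ∣ c 0 := by
      by_contra hnc
      have hprime : Prime (p : ℤ) := Nat.prime_iff_prime_int.mp hp
      have hcop : IsCoprime ((p : ℤ) ^ j) (c 0) :=
        (((hprime.coprime_iff_not_dvd).mpr hnc)).pow_left
      have hdvd : (p : ℤ) ^ j ∣ u i * c 0 := by
        have : u i * c 0 = -(r i * c i.succ) := by linarith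
        rw [this]
        exact dvd_neg.mpr (h2.mul_right _)
      exact h3 (hcop.dvd_of_dvd_mul_right hdvd)
    have hpl : (p : ℤ) ∣ ℓ := dvd_trans (dvd_pow_self _ (by omega)) h1
    calc (p : ℤ) ^ 2 = (p : ℤ) * (p : ℤ) := sq (p : ℤ)
      _ ∣ ℓ * c 0 := mul_dvd_mul hpl hpc
      _ = m := h0
  -- Claim 1 : x₀ has finite order dividing ℓ * ∏ r
  set N : ℤ := ℓ * ∏ m, r m with hN
  have hNpos : 0 < N := by
    apply mul_pos (by linarith)
    exact Finset.prod_pos fun m _ => by linarith [hr m]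
  have hNsmul : N • e₀ ∈ R := by
    refine ⟨fun n => Fin.cases (∏ m, r m)
      (fun m => -((∏ m' ∈ Finset.univ.erase m, r m') * u m)) n, ?_⟩
    rw [Matrix.mulVecLin_apply]
    funext n
    refine Fin.cases ?_ (fun m => ?_) n
    · rw [row0]
      simp [he₀, Pi.single_eq_same, hN, mul_comm]
    · rw [rowS]
      simp only [Fin.cases_zero, Fin.cases_succ]
      have : r m * -((∏ m' ∈ Finset.univ.erase m, r m') * u m)
          = -((∏ m', r m') * u m) := by
        rw [← Finset.mul_prod_erase Finset.univ r (Finset.mem_univ m)]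
        ring
      rw [this]
      simp [he₀, Pi.single_eq_of_ne (Fin.succ_ne_zero m)]
      ring
  -- finite order
  have hfin : IsOfFinAddOrder x₀ := by
    rw [isOfFinAddOrder_iff_nsmul_eq_zero]
    refine ⟨N.toNat, by omega, ?_⟩
    have : (N.toNat : ℤ) • x₀ = 0 := by
      rw [Int.toNat_of_nonneg hNpos.le, hx₀, ← Submodule.Quotient.mk_smul,
        Submodule.Quotient.mk_eq_zero]
      exact hNsmul
    rw [← this, natCast_zsmul]
  set n : ℕ := addOrderOf x₀ with hn
  have hn0 : n ≠ 0 := hfin.addOrderOf_pos.ne'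
  have hdvd : p ^ 2 ∣ n := by
    have : (n : ℤ) • e₀ ∈ R := by
      rw [← Submodule.Quotient.mk_eq_zero, Submodule.Quotient.mk_smul]
      have := addOrderOf_nsmul_eq_zero x₀
      rw [← natCast_zsmul] at this
      exact this
    have := key (n : ℤ) this
    have h2 : ((p ^ 2 : ℕ) : ℤ) ∣ (n : ℤ) := by push_cast; exact_mod_cast this
    exact_mod_cast h2
  set d : ℕ := n / p ^ 2 with hd
  have hnd : p ^ 2 * d = n := Nat.mul_div_cancel' hdvd
  have hd0 : d ≠ 0 := by
    intro h
    rw [h, Nat.mul_zero] at hnd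
    exact hn0 hnd.symm
  refine ⟨d • x₀, ?_⟩
  have hzero : p ^ 2 • (d • x₀) = 0 := by
    rw [smul_smul, hnd]
    exact addOrderOf_nsmul_eq_zero x₀
  have hq1 : addOrderOf (d • x₀) ∣ p ^ 2 := addOrderOf_dvd_of_nsmul_eq_zero hzero
  have hq2 : p ^ 2 ∣ addOrderOf (d • x₀) := by
    have hzero2 : (addOrderOf (d • x₀) * d) • x₀ = 0 := by
      rw [mul_smul]
      exact addOrderOf_nsmul_eq_zero _
    have hnn : n ∣ addOrderOf (d • x₀) * d := addOrderOf_dvd_of_nsmul_eq_zero hzero2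
    rw [← hnd] at hnn
    exact (Nat.mul_dvd_mul_iff_right (Nat.pos_of_ne_zero hd0)).mp hnn
  exact Nat.dvd_antisymm hq1 hq2
end
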